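/- arXiv:0908.1219 — 7 statements merged into one kernel-verified Lean document; each statement's English description precedes it below -/
import Mathlib

section
/- For all n ≥ 1, ∑_{k=0}^n (-1)^k (n choose k) F_{2n-k}(s) = 0 as a polynomial identity in s. -/
/-!
The recurrence `F (m + 2) - F (m + 1) = s F m` says that the forward difference of the shifted
sequence `F (· + 1)` is `s F`. Iterating, the `n`-th forward difference of `F (· + n)` is `s ^ n F`,
and expanding that difference at `j` gives `∑ₖ (-1)ᵏ (n choose k) F (j + 2n - k) = sⁿ F j`.
At `j = 0` the right-hand side vanishes because `F 0 = 0`.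
-/

noncomputable def fibPoly : ℕ → Polynomial ℚ
  | 0 => 0
  | 1 => 1
  | n + 2 => fibPoly (n + 1) + Polynomial.X * fibPoly n

open Finset

section LinearRecurrence

variable {R : Type*} [CommRing R] {a : ℕ → R} {c : R}

theorem fwdDiff_iter_comp_add_eq_pow_mul (hrec : ∀ m, a (m + 2) = a (m + 1) + c * a m) (n : ℕ) :
    (fwdDiff 1)^[n] (fun m ↦ a (m + n)) = fun m ↦ c ^ n * a m := by
  induction n with
  | zero => simp
  | succ n ih =>
    have hdiff : fwdDiff 1 (fun m ↦ a (m + (n + 1))) = c • fun m ↦ a (m + n) := by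
      ext m
      rw [fwdDiff, Pi.smul_apply, smul_eq_mul, show m + 1 + (n + 1) = m + n + 2 by ring,
        ← add_assoc, hrec]
      ring
    rw [Function.iterate_succ_apply, hdiff, fwdDiff_iter_const_smul, ih]
    ext m
    simp only [Pi.smul_apply, smul_eq_mul]
    ring

theorem sum_neg_one_pow_mul_choose_mul_eq_pow_mul
    (hrec : ∀ m, a (m + 2) = a (m + 1) + c * a m) (n j : ℕ) :
    ∑ k ∈ range (n + 1), ((-1) ^ k * n.choose k : R) * a (j + 2 * n - k) = c ^ n * a j := by
  have hexp := fwdDiff_iter_eq_sum_shift 1 (fun m ↦ a (m + n)) n j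
  rw [fwdDiff_iter_comp_add_eq_pow_mul hrec, ← sum_range_reflect] at hexp
  beta_reduce at hexp
  rw [hexp]
  refine sum_congr rfl fun k hk ↦ ?_
  have hkn : k ≤ n := Nat.lt_succ_iff.mp (mem_range.mp hk)
  rw [add_tsub_cancel_right, Nat.sub_sub_self hkn, Nat.choose_symm hkn, zsmul_eq_mul,
    smul_eq_mul, mul_one, show j + (n - k) + n = j + 2 * n - k by omega]
  push_cast
  ring

end LinearRecurrence

theorem fibPoly_add_two (m : ℕ) :
    fibPoly (m + 2) = fibPoly (m + 1) + Polynomial.X * fibPoly m := rfl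

theorem stmt1_general (n : ℕ) :
    ∑ k ∈ Finset.range (n + 1),
      Polynomial.C ((-1 : ℚ) ^ k * (n.choose k : ℚ)) * fibPoly (2 * n - k) = 0 := by
  have h := sum_neg_one_pow_mul_choose_mul_eq_pow_mul fibPoly_add_two n 0
  simp only [zero_add, fibPoly, mul_zero] at h
  simpa only [map_mul, map_pow, map_neg, map_one, map_natCast] using h

theorem stmt1 (n : ℕ) (hn : 1 ≤ n) :
    ∑ k ∈ Finset.range (n + 1),
      Polynomial.C ((-1 : ℚ) ^ k * (n.choose k : ℚ)) * fibPoly (2 * n - k) = 0 :=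
  stmt1_general n
end

section
/- For all n ≥ 0 and k ≥ 0 with k ≤ n, ∑_{j=0}^k (-1)^{k-j} (k choose j) F_{n+j}(s) = s^k · F_{n-k}(s) as polynomials in s. -/
/-! The alternating binomial sum is the `k`-th forward difference of `fibPoly` at `n`, and the
recurrence reads `Δ F_{m+1} = X F_m`; iterating it `k` times gives `X^k F_{n-k}`. -/

open Polynomial Finset fwdDiff

lemma fwdDiff_fibPoly_succ (m : ℕ) : Δ_[1] fibPoly (m + 1) = X * fibPoly m := by
  rw [fwdDiff, fibPoly, add_sub_cancel_left]

lemma fwdDiff_iter_fibPoly {k n : ℕ} (hkn : k ≤ n) :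
    (Δ_[1])^[k] fibPoly n = X ^ k * fibPoly (n - k) := by
  induction k generalizing n with
  | zero => simp
  | succ k ih =>
    obtain ⟨m, rfl⟩ : ∃ m, n = m + (k + 1) := ⟨n - (k + 1), by omega⟩
    have hshift : m + (k + 1) + 1 - k = m + 1 + 1 := by omega
    have hbase : m + (k + 1) - k = m + 1 := by omega
    rw [Function.iterate_succ_apply', fwdDiff, ih (by omega), ih (by omega), hshift, hbase,
      ← mul_sub, ← fwdDiff, fwdDiff_fibPoly_succ, Nat.add_sub_cancel, pow_succ, mul_assoc]

theorem stmt2 (n k : ℕ) (hkn : k ≤ n) :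
    ∑ j ∈ Finset.range (k + 1),
      Polynomial.C ((-1 : ℚ) ^ (k - j) * (k.choose j : ℚ)) * fibPoly (n + j) =
      Polynomial.X ^ k * fibPoly (n - k) := by
  rw [← fwdDiff_iter_fibPoly hkn, fwdDiff_iter_eq_sum_shift]
  refine sum_congr rfl fun j _ => ?_
  rw [zsmul_eq_mul, smul_eq_mul, mul_one]
  simp
end

section
/- Define the linear functional L on polynomials in s by requiring L(F_{2k+1}(s)) = [k = 0] (which determines L since the odd-indexed Fibonacci polynomials F_1, F_3, F_5, ... have degrees 0, 1, 2, ... and form a basis). Then L(F_{2n}(s)) = (-1)^{n-1} G_{2n} for n ≥ 1, where G_{2n} are the Genocchi numbers defined by 2z/(1+e^z) = z + ∑_{n≥1} (-1)^n G_{2n} z^{2n}/(2n)!. -/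
/-- EGF of the Genocchi numbers: 2z/(1+e^z). -/
noncomputable def genocchiSeries : PowerSeries ℚ :=
  2 * PowerSeries.X * (1 + PowerSeries.exp ℚ)⁻¹

/-- The coefficients g_n with 2z/(1+e^z) = ∑ g_n z^n/n!. -/
noncomputable def gcoef (n : ℕ) : ℚ := n.factorial * PowerSeries.coeff n genocchiSeries

/-- The Genocchi number G_{2n}, from 2z/(1+e^z) = z + ∑_{n≥1} (-1)^n G_{2n} z^{2n}/(2n)!. -/
noncomputable def genocchi (n : ℕ) : ℚ := (-1) ^ n * gcoef (2 * n)

/-! Put `h_n = (-1)^(n+1) L(F_n)`. Applying `L` to the identity `∑_k (-1)^k C(n,k) F_k = -F_n`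
gives `∑_k C(n,k) h_k = L(F_n)`, which is `-h_n` for even `n` and, by the hypothesis on `L`,
`2[n = 1] - h_n` for odd `n`. For the exponential generating function `H` of `h` this says
`H(z)(1 + e^z) = 2z`, so `h_n = g_n`, the coefficients of `2z/(1 + e^z)`, and
`L(F_{2n}) = -g_{2n}`. -/

open Polynomial Finset fwdDiff

/- `Δ u` satisfies the same recurrence as `u`, so the induction runs over all solutions at once. -/
theorem fwdDiff_iter_apply_zero_of_fibPoly_rec {u : ℕ → ℚ[X]}
    (hu : ∀ n, u (n + 2) = u (n + 1) + X * u n) (n : ℕ) :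
    (Δ_[1])^[n] u 0 = (-1) ^ n * (u 0 * fibPoly (n + 1) - u 1 * fibPoly n) := by
  induction n generalizing u with
  | zero => simp [fibPoly]
  | succ n ih =>
    have hdiff : ∀ k, Δ_[1] u (k + 2) = Δ_[1] u (k + 1) + X * Δ_[1] u k := by
      intro k
      simp only [fwdDiff, hu]
      ring
    rw [Function.iterate_succ_apply, ih hdiff]
    simp only [fwdDiff, zero_add, hu 0, fibPoly]
    ring

theorem sum_range_neg_one_pow_mul_choose_smul_eq_fwdDiff_iter {G : Type*} [AddCommGroup G]
    (f : ℕ → G) (n : ℕ) :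
    ∑ k ∈ range (n + 1), ((-1 : ℤ) ^ k * n.choose k) • f k =
      (-1 : ℤ) ^ n • (Δ_[1])^[n] f 0 := by
  rw [fwdDiff_iter_eq_sum_shift, smul_sum]
  refine sum_congr rfl fun k hk ↦ ?_
  have hsign : (-1 : ℤ) ^ n * (-1) ^ (n - k) = (-1) ^ k := by
    obtain ⟨j, rfl⟩ := Nat.exists_eq_add_of_le (Nat.le_of_lt_succ (mem_range.mp hk))
    rw [Nat.add_sub_cancel_left, pow_add, mul_assoc, ← pow_add, ← two_mul, pow_mul]
    simp
  rw [smul_smul, ← mul_assoc, hsign, zero_add, smul_eq_mul, mul_one]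

theorem sum_range_neg_one_pow_mul_choose_smul_fibPoly (n : ℕ) :
    ∑ k ∈ range (n + 1), ((-1 : ℤ) ^ k * n.choose k) • fibPoly k = -fibPoly n := by
  rw [sum_range_neg_one_pow_mul_choose_smul_eq_fwdDiff_iter,
    fwdDiff_iter_apply_zero_of_fibPoly_rec fun _ ↦ rfl]
  simp [fibPoly, ← mul_assoc, ← pow_add, zsmul_eq_mul]

theorem sum_range_choose_mul_neg_one_pow_mul_map_fibPoly (L : ℚ[X] →ₗ[ℚ] ℚ) (n : ℕ) :
    ∑ k ∈ range (n + 1), n.choose k * ((-1) ^ (k + 1) * L (fibPoly k)) = L (fibPoly n) := by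
  have h := congrArg L (sum_range_neg_one_pow_mul_choose_smul_fibPoly n)
  simp only [map_sum, map_neg, map_zsmul] at h
  push_cast [zsmul_eq_mul] at h
  rw [← neg_neg (L (fibPoly n)), ← h, ← sum_neg_distrib]
  refine sum_congr rfl fun k _ ↦ ?_
  ring

theorem coeff_mk_div_factorial_mul_exp (f : ℕ → ℚ) (n : ℕ) :
    PowerSeries.coeff n (PowerSeries.mk (fun k ↦ f k / k.factorial) * PowerSeries.exp ℚ) =
      (∑ k ∈ range (n + 1), n.choose k * f k) / n.factorial := by
  rw [PowerSeries.coeff_mul, Nat.sum_antidiagonal_eq_sum_range_succ_mk, sum_div]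
  refine sum_congr rfl fun k hk ↦ ?_
  have hkn : k ≤ n := Nat.lt_succ_iff.mp (mem_range.mp hk)
  simp only [PowerSeries.coeff_mk, PowerSeries.coeff_exp, Algebra.algebraMap_self,
    RingHom.id_apply]
  rw [Nat.cast_choose ℚ hkn]
  field_simp

theorem eq_gcoef_of_add_sum_range_choose_mul {f : ℕ → ℚ}
    (hf : ∀ n, f n + ∑ k ∈ range (n + 1), n.choose k * f k = if n = 1 then 2 else 0) :
    f = gcoef := by
  have hmul : PowerSeries.mk (fun k ↦ f k / k.factorial) * (1 + PowerSeries.exp ℚ) =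
      2 * PowerSeries.X := by
    ext n
    rw [mul_one_add, map_add, coeff_mk_div_factorial_mul_exp, PowerSeries.coeff_mk,
      ← add_div, hf n, show (2 : PowerSeries ℚ) = PowerSeries.C 2 from rfl,
      PowerSeries.coeff_C_mul, PowerSeries.coeff_X]
    split_ifs with hn <;> simp [hn]
  have hegf : PowerSeries.mk (fun k ↦ f k / k.factorial) = genocchiSeries :=
    (PowerSeries.eq_mul_inv_iff_mul_eq (by simp)).2 hmul
  funext n
  rw [gcoef, ← hegf, PowerSeries.coeff_mk]
  field_simp

theorem gcoef_eq_neg_one_pow_mul_map_fibPoly (L : ℚ[X] →ₗ[ℚ] ℚ)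
    (hL : ∀ k : ℕ, L (fibPoly (2 * k + 1)) = if k = 0 then 1 else 0) (n : ℕ) :
    gcoef n = (-1) ^ (n + 1) * L (fibPoly n) := by
  suffices h : (fun n ↦ (-1) ^ (n + 1) * L (fibPoly n)) = gcoef from (congrFun h n).symm
  refine eq_gcoef_of_add_sum_range_choose_mul fun n ↦ ?_
  rw [sum_range_choose_mul_neg_one_pow_mul_map_fibPoly]
  obtain ⟨m, rfl | rfl⟩ := Nat.even_or_odd' n
  · rw [pow_succ, pow_mul]
    simp
  · rw [pow_succ, pow_succ, pow_mul, hL]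
    by_cases hm : m = 0 <;> simp [hm, one_add_one_eq_two]

theorem stmt3_general (L : Polynomial ℚ →ₗ[ℚ] ℚ)
    (hL : ∀ k : ℕ, L (fibPoly (2 * k + 1)) = if k = 0 then 1 else 0)
    (n : ℕ) :
    L (fibPoly (2 * n)) = (-1) ^ (n - 1) * genocchi n := by
  rw [genocchi, gcoef_eq_neg_one_pow_mul_map_fibPoly L hL, pow_succ, pow_mul]
  rcases n with _ | n
  · simp [fibPoly]
  · simp [pow_succ, ← mul_assoc, ← mul_pow]

/-- If L is the linear functional with L(F_(2k+1)) = [k = 0], then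
L(F_(2n)) = (-1)^(n-1) G_(2n) for n ≥ 1. -/
theorem stmt3 (L : Polynomial ℚ →ₗ[ℚ] ℚ)
    (hL : ∀ k : ℕ, L (fibPoly (2 * k + 1)) = if k = 0 then 1 else 0)
    (n : ℕ) (hn : 1 ≤ n) :
    L (fibPoly (2 * n)) = (-1) ^ (n - 1) * genocchi n :=
  stmt3_general L hL n
end

section
/- Define the linear functional M on polynomials in s by M(F_{2n}(s)) = [n = 1] (determined since F_2, F_4, F_6, ... have degrees 0, 1, 2, ...). Then M(F_{2n+1}(s)) = (2n+1) B_{2n} for all n ≥ 0, where B_{2n} are the Bernoulli numbers. -/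
/-!
For `A = !![1, s; 1, 0]` one has `(A ^ i) 1 0 = F_i` and `(1 - 2A)² = (1 + 4s) • 1`, so the
binomial expansion of `(1 - 2A)^(2k)` gives `∑ᵢ C(2k, i) (-2)ⁱ F_i = 0`. Hence `yᵢ = M(F_i)`
satisfies `∑ᵢ C(2k, i) (-2)ⁱ yᵢ = 0` for all `k`; the equation for `k = n + 1` solves for
`y_(2n+1)` in terms of lower values and `y_(2n+2)`, so the even values determine the odd ones.
The sequence `zᵢ = i B'_(i-1)` (with `B'₁ = +1/2`) has the same even values and satisfies the
same equations: `C(2k, i) i = 2k C(2k-1, i-1)` reduces them to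
`∑ⱼ C(m, j) 2ʲ Bⱼ = 2ᵐ Bₘ(1/2) = 0` for odd `m`.
-/
open Finset

section
open Polynomial (X)
open scoped Polynomial

noncomputable def fibMatrix : Matrix (Fin 2) (Fin 2) ℚ[X] := !![1, X; 1, 0]

theorem fibMatrix_pow_apply (i : ℕ) :
    (fibMatrix ^ i) 0 0 = fibPoly (i + 1) ∧ (fibMatrix ^ i) 1 0 = fibPoly i := by
  induction i with
  | zero => simp [fibPoly]
  | succ i ih =>
    rw [pow_succ', Matrix.mul_apply, Matrix.mul_apply, Fin.sum_univ_two, Fin.sum_univ_two,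
      ih.1, ih.2]
    simp [fibMatrix, fibPoly]

theorem one_sub_two_smul_fibMatrix_sq :
    (1 - (2 : ℚ) • fibMatrix) ^ 2 = Matrix.scalar (Fin 2) (1 + 4 * X) := by
  ext i j : 1
  fin_cases i <;> fin_cases j <;>
    simp [sq, Matrix.mul_apply, fibMatrix, Polynomial.smul_eq_C_mul, map_ofNat] <;> ring

theorem sum_two_mul_choose_mul_neg_two_pow_smul_fibPoly (k : ℕ) :
    ∑ i ∈ range (2 * k + 1), ((2 * k).choose i * (-2) ^ i : ℚ) • fibPoly i = 0 := by
  have hbinom : (1 - (2 : ℚ) • fibMatrix) ^ (2 * k)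
      = ∑ i ∈ range (2 * k + 1), ((2 * k).choose i * (-2) ^ i : ℚ) • fibMatrix ^ i := by
    rw [← neg_add_eq_sub, ← neg_smul, (Commute.one_right _).add_pow]
    refine sum_congr rfl fun i _ => ?_
    rw [one_pow, mul_one, ← nsmul_eq_mul', smul_pow, ← Nat.cast_smul_eq_nsmul ℚ, smul_smul]
  have h10 := congrFun (congrFun hbinom 1) 0
  rw [pow_mul, one_sub_two_smul_fibMatrix_sq, ← map_pow, Matrix.scalar_apply,
    Matrix.diagonal_apply_ne _ (by decide), Matrix.sum_apply] at h10
  simp only [Matrix.smul_apply, (fibMatrix_pow_apply _).2] at h10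
  exact h10.symm

end

theorem sum_choose_mul_two_pow_mul_bernoulli_of_odd {m : ℕ} (hm : Odd m) :
    ∑ k ∈ range (m + 1), (m.choose k : ℚ) * 2 ^ k * bernoulli k = 0 := by
  have hhalf : (Polynomial.bernoulli m).eval (1 / 2) = 0 := by
    have h := Polynomial.bernoulli_eval_one_sub m (1 / 2)
    rw [hm.neg_one_pow] at h
    norm_num at h
    linarith
  calc ∑ k ∈ range (m + 1), (m.choose k : ℚ) * 2 ^ k * bernoulli k
      = 2 ^ m * (Polynomial.bernoulli m).eval (1 / 2) := by
        rw [Polynomial.bernoulli, Polynomial.eval_finsetSum, mul_sum]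
        refine sum_congr rfl fun k hk => ?_
        have hsplit : (2 : ℚ) ^ m = 2 ^ k * 2 ^ (m - k) := by
          rw [← pow_add, Nat.add_sub_of_le (mem_range_succ_iff.1 hk)]
        rw [Polynomial.eval_monomial, hsplit, one_div, inv_pow]
        field_simp
    _ = 0 := by rw [hhalf, mul_zero]

theorem sum_two_mul_choose_mul_neg_two_pow_mul_bernoulli'_pred (k : ℕ) :
    ∑ i ∈ range (2 * k + 1), ((2 * k).choose i : ℚ) * (-2) ^ i * (i * bernoulli' (i - 1)) = 0 := by
  rcases k with _ | k
  · simp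
  obtain ⟨m, hm, hmk⟩ : ∃ m, Odd m ∧ 2 * (k + 1) = m + 1 := ⟨2 * k + 1, odd_two_mul_add_one k, rfl⟩
  rw [hmk, sum_range_succ', Nat.cast_zero, zero_mul, mul_zero, add_zero]
  have hterm : ∀ i ∈ range (m + 1),
      ((m + 1).choose (i + 1) : ℚ) * (-2) ^ (i + 1) * (((i + 1 : ℕ) : ℚ) * bernoulli' (i + 1 - 1))
        = -2 * (m + 1) * ((m.choose i : ℚ) * 2 ^ i * bernoulli i) := by
    intro i _
    have hchoose : ((m + 1 : ℕ) : ℚ) * m.choose i = (m + 1).choose (i + 1) * (i + 1 : ℕ) := by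
      exact_mod_cast Nat.add_one_mul_choose_eq m i
    have hsq : ((-1 : ℚ) ^ i) ^ 2 = 1 := by rw [← pow_mul, pow_mul', neg_one_sq, one_pow]
    rw [Nat.add_sub_cancel, bernoulli'_eq_bernoulli, pow_succ, neg_pow]
    push_cast at hchoose ⊢
    linear_combination (-2 * 2 ^ i * bernoulli i * ((m + 1).choose (i + 1) * (i + 1))) * hsq
      + (2 * 2 ^ i * bernoulli i) * hchoose
  rw [sum_congr rfl hterm, ← mul_sum, sum_choose_mul_two_pow_mul_bernoulli_of_odd hm, mul_zero]

theorem two_mul_mul_bernoulli'_two_mul_sub_one (j : ℕ) :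
    ((2 * j : ℕ) : ℚ) * bernoulli' (2 * j - 1) = if j = 1 then 1 else 0 := by
  rcases j with _ | _ | j
  · simp
  · norm_num [bernoulli'_one]
  · rw [bernoulli'_eq_zero_of_odd ⟨j + 1, by omega⟩ (by omega), if_neg (by omega), mul_zero]

theorem eq_of_even_eq_of_sum_choose_mul_pow_eq {K : Type*} [CommRing K] [IsDomain K] [CharZero K]
    {c : K} (hc : c ≠ 0) {y z : ℕ → K} (heven : ∀ j, y (2 * j) = z (2 * j))
    (hy : ∀ k, ∑ i ∈ range (2 * k + 1), ((2 * k).choose i : K) * c ^ i * y i = 0)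
    (hz : ∀ k, ∑ i ∈ range (2 * k + 1), ((2 * k).choose i : K) * c ^ i * z i = 0) : y = z := by
  funext n
  induction n using Nat.strong_induction_on with | _ n ih
  obtain ⟨j, rfl | rfl⟩ := Nat.even_or_odd' n
  · exact heven j
  have hdiff : ∑ i ∈ range (2 * (j + 1) + 1),
      ((2 * (j + 1)).choose i : K) * c ^ i * (y i - z i) = 0 := by
    simp only [mul_sub, sum_sub_distrib, hy, hz, sub_self]
  rw [sum_eq_single (2 * j + 1)] at hdiff
  · have hcoeff : ((2 * (j + 1)).choose (2 * j + 1) : K) * c ^ (2 * j + 1) ≠ 0 :=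
      mul_ne_zero (Nat.cast_ne_zero.2 (Nat.choose_pos (by omega)).ne') (pow_ne_zero _ hc)
    exact sub_eq_zero.1 ((mul_eq_zero.1 hdiff).resolve_left hcoeff)
  · intro i hi hne
    have hyz : y i = z i := by
      rcases Nat.lt_or_ge i (2 * j + 1) with hlt | hge
      · exact ih i hlt
      · rw [show i = 2 * (j + 1) by rw [mem_range] at hi; omega]
        exact heven (j + 1)
    rw [hyz, sub_self, mul_zero]
  · intro h
    exact absurd (mem_range.2 (by omega)) h

/-- If M is the linear functional with M(F_(2n)) = [n = 1], then
M(F_(2n+1)) = (2n+1) B_(2n). -/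
theorem stmt5 (M : Polynomial ℚ →ₗ[ℚ] ℚ)
    (hM : ∀ n : ℕ, M (fibPoly (2 * n)) = if n = 1 then 1 else 0)
    (n : ℕ) :
    M (fibPoly (2 * n + 1)) = (2 * (n : ℚ) + 1) * bernoulli (2 * n) := by
  have hfib : ∀ k, ∑ i ∈ range (2 * k + 1), ((2 * k).choose i : ℚ) * (-2) ^ i * M (fibPoly i) = 0 :=
    fun k => by
      simpa only [map_sum, map_smul, smul_eq_mul, map_zero] using
        congrArg M (sum_two_mul_choose_mul_neg_two_pow_smul_fibPoly k)
  have hvalues := congrFun (eq_of_even_eq_of_sum_choose_mul_pow_eq (by norm_num : (-2 : ℚ) ≠ 0)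
    (fun j => (hM j).trans (two_mul_mul_bernoulli'_two_mul_sub_one j).symm) hfib
    sum_two_mul_choose_mul_neg_two_pow_mul_bernoulli'_pred) (2 * n + 1)
  rw [hvalues, Nat.add_sub_cancel, bernoulli'_eq_bernoulli, (even_two_mul n).neg_one_pow, one_mul,
    Nat.cast_succ, Nat.cast_mul, Nat.cast_ofNat]
end

section
/- For n ≥ 0, F_{2n+1}(s) = ∑_{j=0}^n C(2n+1, 2j+1) · (B_{2n-2j}/(j+1)) · F_{2j+2}(s) as polynomials in s, where B denotes Bernoulli numbers. -/
/-!
Substituting `s = x(x+1)` turns the characteristic roots of the Fibonacci recurrence into `x + 1`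
and `-x`, so `(2x+1) F_m(x² + x) = (x+1)^m - (-x)^m`, and substitution of `x² + x` is injective.
The claim thus becomes `(x+1)^(2n+1) + x^(2n+1) = ∑ ... ((x+1)^(2j+2) - x^(2j+2))`. With
`E(y) = B_{2n+2}(y) + B_{2n+2}(-y)`, twice the even part of the Bernoulli polynomial, the right-hand
side is `(E(x+1) - E(x)) / (2n+2)`, and `B_m(1+y) - B_m(y) = m y^(m-1)` at `y = x` and
`y = -(x+1)` evaluates this difference.
-/

open Finset
open Polynomial hiding bernoulli

theorem Finset.sum_range_two_mul_add_one {M : Type*} [AddCommMonoid M] (f : ℕ → M) (k : ℕ) :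
    ∑ i ∈ range (2 * k + 1), f i =
      ∑ j ∈ range (k + 1), f (2 * j) + ∑ j ∈ range k, f (2 * j + 1) := by
  induction k with
  | zero => simp
  | succ k ih =>
    rw [show 2 * (k + 1) + 1 = 2 * k + 1 + 1 + 1 by ring, sum_range_succ _ (2 * k + 1 + 1),
      sum_range_succ _ (2 * k + 1), ih, sum_range_succ (fun j => f (2 * j)) (k + 1),
      sum_range_succ (fun j => f (2 * j + 1)) k]
    abel

theorem Polynomial.comp_left_injective {R : Type*} [Ring R] [NoZeroDivisors R] {q : R[X]}
    (hq : q.natDegree ≠ 0) : Function.Injective fun p : R[X] => p.comp q := by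
  intro p p' h
  have hzero : (p - p').comp q = 0 := by rw [sub_comp, sub_eq_zero]; exact h
  rcases comp_eq_zero_iff.mp hzero with hp | ⟨-, hconst⟩
  · exact sub_eq_zero.mp hp
  · exact absurd (congrArg natDegree hconst) (by simpa using hq)

theorem two_mul_X_add_one_mul_fibPoly_comp : ∀ m : ℕ,
    (2 * X + 1) * (fibPoly m).comp (X ^ 2 + X) = (X + 1) ^ m - (-X : ℚ[X]) ^ m
  | 0 => by simp [fibPoly]
  | 1 => by simp [fibPoly]; ring
  | m + 2 => by
    rw [fibPoly, add_comp, mul_comp, X_comp, mul_add, two_mul_X_add_one_mul_fibPoly_comp (m + 1),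
      mul_left_comm, two_mul_X_add_one_mul_fibPoly_comp m]
    ring

theorem Polynomial.bernoulli_eval_add_eval_neg (k : ℕ) (y : ℚ) :
    (bernoulli (2 * k)).eval y + (bernoulli (2 * k)).eval (-y) =
      2 * ∑ j ∈ range (k + 1),
        ((2 * k).choose (2 * j) : ℚ) * _root_.bernoulli (2 * k - 2 * j) * y ^ (2 * j) := by
  simp only [bernoulli_def, eval_finsetSum, eval_monomial, ← sum_add_distrib]
  rw [sum_range_two_mul_add_one, mul_sum]
  have hodd : ∀ j, y ^ (2 * j + 1) + (-y) ^ (2 * j + 1) = 0 := fun j => by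
    rw [Odd.neg_pow ⟨j, rfl⟩, add_neg_cancel]
  simp only [(even_two_mul _).neg_pow, ← mul_add, hodd, mul_zero, sum_const_zero, add_zero]
  exact sum_congr rfl fun j _ => by ring

theorem Polynomial.bernoulli_eval_add_eval_neg_add_one_sub (n : ℕ) (x : ℚ) :
    (bernoulli (2 * (n + 1))).eval (x + 1) + (bernoulli (2 * (n + 1))).eval (-(x + 1))
      - ((bernoulli (2 * (n + 1))).eval x + (bernoulli (2 * (n + 1))).eval (-x)) =
      (2 * n + 2) * ((x + 1) ^ (2 * n + 1) + x ^ (2 * n + 1)) := by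
  have h₁ := bernoulli_eval_one_add (2 * (n + 1)) x
  have h₂ := bernoulli_eval_one_add (2 * (n + 1)) (-(x + 1))
  rw [show 1 + -(x + 1) = -x by ring, show 2 * (n + 1) - 1 = 2 * n + 1 by omega,
    Odd.neg_pow ⟨n, rfl⟩] at h₂
  rw [show 2 * (n + 1) - 1 = 2 * n + 1 by omega, add_comm 1 x] at h₁
  rw [h₁, h₂]
  push_cast
  ring

theorem sum_choose_mul_bernoulli_mul_pow_sub_pow (n : ℕ) (x : ℚ) :
    ∑ j ∈ range (n + 1), ((2 * n + 2).choose (2 * j + 2) : ℚ) * bernoulli (2 * n - 2 * j) *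
        ((x + 1) ^ (2 * j + 2) - x ^ (2 * j + 2)) =
      (n + 1) * ((x + 1) ^ (2 * n + 1) + x ^ (2 * n + 1)) := by
  have h := bernoulli_eval_add_eval_neg_add_one_sub n x
  rw [bernoulli_eval_add_eval_neg, bernoulli_eval_add_eval_neg, ← mul_sub,
    ← sum_sub_distrib, sum_range_succ'] at h
  simp only [mul_zero, pow_zero, sub_self, add_zero, ← mul_sub, mul_add, mul_one,
    Nat.add_sub_add_right] at h
  linarith

theorem choose_two_mul_add_one_div (n j : ℕ) :
    ((2 * n + 1).choose (2 * j + 1) : ℚ) / (j + 1) =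
      (2 * n + 2).choose (2 * j + 2) / (n + 1) := by
  have h : ((2 * n + 1 + 1 : ℕ) : ℚ) * (2 * n + 1).choose (2 * j + 1) =
      (2 * n + 1 + 1).choose (2 * j + 1 + 1) * ((2 * j + 1 + 1 : ℕ) : ℚ) := by
    exact_mod_cast Nat.add_one_mul_choose_eq (2 * n + 1) (2 * j + 1)
  rw [div_eq_div_iff (by positivity) (by positivity)]
  push_cast at h
  linear_combination h / 2

theorem X_add_one_pow_add_X_pow_eq_sum (n : ℕ) :
    (X + 1 : ℚ[X]) ^ (2 * n + 1) + X ^ (2 * n + 1) =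
      ∑ j ∈ range (n + 1),
        C (((2 * n + 1).choose (2 * j + 1) : ℚ) * (bernoulli (2 * n - 2 * j) / ((j : ℚ) + 1))) *
          ((X + 1) ^ (2 * j + 2) - X ^ (2 * j + 2)) := by
  refine Polynomial.funext fun x => ?_
  simp only [eval_finsetSum, eval_mul, eval_C, eval_add, eval_sub, eval_pow, eval_X, eval_one]
  have hn : (n : ℚ) + 1 ≠ 0 := by positivity
  rw [← mul_right_inj' hn, ← sum_choose_mul_bernoulli_mul_pow_sub_pow, mul_sum]
  refine (sum_congr rfl fun j _ => ?_).symm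
  calc ((n : ℚ) + 1) * (((2 * n + 1).choose (2 * j + 1) : ℚ) *
          (bernoulli (2 * n - 2 * j) / ((j : ℚ) + 1)) * ((x + 1) ^ (2 * j + 2) - x ^ (2 * j + 2)))
      = (n + 1) * (((2 * n + 1).choose (2 * j + 1) : ℚ) / (j + 1)) * bernoulli (2 * n - 2 * j) *
          ((x + 1) ^ (2 * j + 2) - x ^ (2 * j + 2)) := by ring
    _ = _ := by rw [choose_two_mul_add_one_div, mul_div_cancel₀ _ hn]

theorem stmt6 (n : ℕ) :
    fibPoly (2 * n + 1) =
      ∑ j ∈ Finset.range (n + 1),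
        Polynomial.C (((2 * n + 1).choose (2 * j + 1) : ℚ) *
            (bernoulli (2 * n - 2 * j) / ((j : ℚ) + 1))) * fibPoly (2 * j + 2) := by
  have hdeg : (X ^ 2 + X : ℚ[X]).natDegree ≠ 0 := by
    rw [show (X ^ 2 + X : ℚ[X]).natDegree = 2 by compute_degree!]; norm_num
  have h2X : (2 * X + 1 : ℚ[X]) ≠ 0 := fun h => by simpa using congrArg (eval 0) h
  have heven (j : ℕ) : (-X : ℚ[X]) ^ (2 * j + 2) = X ^ (2 * j + 2) :=
    Even.neg_pow ⟨j + 1, by ring⟩ _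
  refine comp_left_injective hdeg (mul_left_cancel₀ h2X ?_)
  simp only [Polynomial.sum_comp, mul_comp, C_comp, mul_sum, mul_left_comm (2 * X + 1 : ℚ[X]),
    two_mul_X_add_one_mul_fibPoly_comp, heven, Odd.neg_pow ⟨n, rfl⟩, sub_neg_eq_add]
  exact X_add_one_pow_add_X_pow_eq_sum n
end

section
/- (v. Ettingshausen–Seidel–Kaneko identity) For all n ≥ 0, ∑_{i=0}^{n+1} C(n+1, i) (n+i+1) B_{n+i} = 0, where B denotes the Bernoulli numbers. -/
/-!
Write `S m n = ∑ᵢ C(m, i) B_{n+i}`. Pascal's rule gives `S (m+1) n = S m n + S m (n+1)`, and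
`S m 0 = B'_m = (-1)^m B_m`; by induction on `m` these yield the reflection law
`S m n = (-1)^(m+n) S n m`. Since `i C(n+1, i) = (n+1) C(n, i-1)`, the left-hand side of the
identity equals `(n+1) (S (n+1) n + S n (n+1))`, which vanishes by reflection.
-/

open Finset

def bernoulliShiftSum (m n : ℕ) : ℚ :=
  ∑ i ∈ range (m + 1), (m.choose i : ℚ) * bernoulli (n + i)

theorem bernoulliShiftSum_zero_left (n : ℕ) : bernoulliShiftSum 0 n = bernoulli n := by
  simp [bernoulliShiftSum]

theorem bernoulliShiftSum_zero_right (m : ℕ) : bernoulliShiftSum m 0 = bernoulli' m := by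
  simp only [bernoulliShiftSum, zero_add, sum_range_succ, sum_bernoulli, Nat.choose_self,
    Nat.cast_one, one_mul]
  by_cases hm : m = 1
  · subst hm
    norm_num
  · simp [hm, bernoulli_eq_bernoulli'_of_ne_one hm]

theorem bernoulliShiftSum_succ_left (m n : ℕ) :
    bernoulliShiftSum (m + 1) n = bernoulliShiftSum m n + bernoulliShiftSum m (n + 1) := by
  simpa only [bernoulliShiftSum, add_right_comm n 1, add_assoc n] using
    sum_choose_succ_mul (fun i _ => bernoulli (n + i)) m

theorem bernoulliShiftSum_reflect (m n : ℕ) :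
    bernoulliShiftSum m n = (-1) ^ (m + n) * bernoulliShiftSum n m := by
  induction m generalizing n with
  | zero =>
    rw [bernoulliShiftSum_zero_left, bernoulliShiftSum_zero_right, bernoulli'_eq_bernoulli,
      zero_add, ← mul_assoc, ← pow_add, Even.neg_one_pow ⟨n, rfl⟩, one_mul]
  | succ m ih =>
    have pascal := bernoulliShiftSum_succ_left n m
    rw [bernoulliShiftSum_succ_left, ih, ih, pascal, ← add_assoc, add_right_comm m 1, pow_succ]
    ring

theorem sum_mul_choose_succ_mul_bernoulli (m n : ℕ) :
    ∑ i ∈ range (m + 2), (i : ℚ) * ((m + 1).choose i : ℚ) * bernoulli (n + i) =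
      (m + 1) * bernoulliShiftSum m (n + 1) := by
  rw [sum_range_succ', Nat.cast_zero, zero_mul, zero_mul, add_zero, bernoulliShiftSum, mul_sum]
  refine sum_congr rfl fun i _ => ?_
  have hchoose : ((m + 1 : ℕ) : ℚ) * m.choose i = (m + 1).choose (i + 1) * (i + 1 : ℕ) := by
    exact_mod_cast Nat.add_one_mul_choose_eq m i
  rw [add_right_comm n 1, ← add_assoc n]
  push_cast at hchoose ⊢
  linear_combination bernoulli (n + i + 1) * hchoose.symm

/-- The v. Ettingshausen–Seidel–Kaneko identity:
∑_(i=0)^(n+1) C(n+1, i) (n+i+1) B_(n+i) = 0 for all n ≥ 0. -/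
theorem stmt7 (n : ℕ) :
    ∑ i ∈ Finset.range (n + 2),
      ((n + 1).choose i : ℚ) * ((n : ℚ) + (i : ℚ) + 1) * bernoulli (n + i) = 0 := by
  have split : ∑ i ∈ range (n + 2), ((n + 1).choose i : ℚ) * ((n : ℚ) + i + 1) * bernoulli (n + i)
      = (n + 1) * bernoulliShiftSum (n + 1) n +
        ∑ i ∈ range (n + 2), (i : ℚ) * ((n + 1).choose i : ℚ) * bernoulli (n + i) := by
    rw [bernoulliShiftSum, mul_sum, ← sum_add_distrib]
    exact sum_congr rfl fun i _ => by ring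
  have sign : (-1 : ℚ) ^ (n + 1 + n) = -1 := Odd.neg_one_pow ⟨n, by ring⟩
  rw [split, sum_mul_choose_succ_mul_bernoulli, bernoulliShiftSum_reflect (n + 1), sign]
  ring
end

section
/- Define the Seidel triangle (g_{i,j}) for Genocchi numbers by g_{1,1} = g_{2,1} = 1, g_{i,j} = 0 for j ≤ 0 or j > ⌈i/2⌉, g_{2i+1,j} = g_{2i+1,j-1} + g_{2i,j}, and g_{2i,j} = g_{2i,j+1} + g_{2i-1,j}. Then for 1 ≤ k ≤ n, g_{2n,k} = (-1)^n L(s^{n+1-k} F_{2k-1}(s)), and for 1 ≤ k ≤ n+1, g_{2n+1,k} = (-1)^n L(s^{n+1-k} F_{2k}(s)), where L is the linear functional with L(F_{2j+1}) = [j = 0]. -/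
open Polynomial

lemma X_pow_mul_fibPoly_add_two (m j : ℕ) :
    (X : ℚ[X]) ^ m * fibPoly (j + 2) = X ^ m * fibPoly (j + 1) + X ^ (m + 1) * fibPoly j := by
  rw [fibPoly]; ring

section Rows

variable {α : Type*} [Add α]

lemma eq_of_backward_rec {a b c : ℕ → α} {N : ℕ}
    (ha : ∀ k, 1 ≤ k → k ≤ N → a k = a (k + 1) + c k)
    (hb : ∀ k, 1 ≤ k → k ≤ N → b k = b (k + 1) + c k) (htop : a (N + 1) = b (N + 1)) :
    ∀ k, 1 ≤ k → k ≤ N + 1 → a k = b k := by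
  intro k hk hkN
  induction hkN using Nat.decreasingInduction with
  | self => exact htop
  | of_succ k hkN ih => rw [ha k hk (by omega), hb k hk (by omega), ih (by omega)]

lemma eq_of_forward_rec {a b c : ℕ → α} {N : ℕ}
    (ha : ∀ k, k ≤ N → a (k + 1) = a k + c (k + 1))
    (hb : ∀ k, k ≤ N → b (k + 1) = b k + c (k + 1)) (hbot : a 0 = b 0) :
    ∀ k, k ≤ N + 1 → a k = b k := by
  intro k hk
  induction k with
  | zero => exact hbot
  | succ k ih => rw [ha k (by omega), hb k (by omega), ih (by omega)]

end Rows

section ClosedForm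

variable (L : ℚ[X] →ₗ[ℚ] ℚ)

noncomputable def seidelEven (n k : ℕ) : ℚ := (-1) ^ n * L (X ^ (n + 1 - k) * fibPoly (2 * k - 1))

noncomputable def seidelOdd (n k : ℕ) : ℚ := (-1) ^ n * L (X ^ (n + 1 - k) * fibPoly (2 * k))

lemma seidelEven_rec (n k : ℕ) (hk : 1 ≤ k) (hkn : k ≤ n + 1) :
    seidelEven L (n + 1) k = seidelEven L (n + 1) (k + 1) + seidelOdd L n k := by
  obtain ⟨j, rfl⟩ : ∃ j, k = j + 1 := ⟨k - 1, by omega⟩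
  obtain ⟨d, rfl⟩ : ∃ d, n = j + d := ⟨n - j, by omega⟩
  simp only [seidelEven, seidelOdd]
  rw [show j + d + 1 + 1 - (j + 1) = d + 1 by omega, show j + d + 1 + 1 - (j + 1 + 1) = d by omega,
    show j + d + 1 - (j + 1) = d by omega, show 2 * (j + 1) - 1 = 2 * j + 1 by omega,
    show 2 * (j + 1 + 1) - 1 = 2 * j + 1 + 2 by omega, show 2 * (j + 1) = 2 * j + 1 + 1 by omega,
    X_pow_mul_fibPoly_add_two, map_add]
  ring

lemma seidelOdd_rec (n k : ℕ) (hkn : k ≤ n) :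
    seidelOdd L n (k + 1) = seidelOdd L n k + seidelEven L n (k + 1) := by
  obtain ⟨d, rfl⟩ : ∃ d, n = k + d := ⟨n - k, by omega⟩
  simp only [seidelEven, seidelOdd]
  rw [show k + d + 1 - (k + 1) = d by omega, show k + d + 1 - k = d + 1 by omega,
    show 2 * (k + 1) - 1 = 2 * k + 1 by omega, show 2 * (k + 1) = 2 * k + 2 by omega, X_pow_mul_fibPoly_add_two, map_add]
  ring

variable {L}

lemma seidelEven_succ_succ_eq_zero (hL : ∀ k : ℕ, L (fibPoly (2 * k + 1)) = if k = 0 then 1 else 0)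
    (n : ℕ) : seidelEven L (n + 1) (n + 2) = 0 := by
  simp [seidelEven, show 2 * (n + 2) - 1 = 2 * (n + 1) + 1 by omega, hL]

lemma seidelOdd_zero (n : ℕ) : seidelOdd L n 0 = 0 := by
  simp [seidelOdd, fibPoly]

lemma seidelOdd_zero_one (hL : ∀ k : ℕ, L (fibPoly (2 * k + 1)) = if k = 0 then 1 else 0) :
    seidelOdd L 0 1 = 1 := by
  simpa [seidelOdd, fibPoly] using hL 0

end ClosedForm

theorem stmt10_general (g : ℕ → ℕ → ℚ)
    (h11 : g 1 1 = 1)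
    (hzero : ∀ i j : ℕ, j = 0 ∨ (i + 1) / 2 < j → g i j = 0)
    (hodd : ∀ i : ℕ, 1 ≤ i → ∀ j : ℕ, 1 ≤ j → j ≤ i + 1 →
      g (2 * i + 1) j = g (2 * i + 1) (j - 1) + g (2 * i) j)
    (heven : ∀ i : ℕ, 1 ≤ i → ∀ j : ℕ, 1 ≤ j → j ≤ i →
      g (2 * i) j = g (2 * i) (j + 1) + g (2 * i - 1) j)
    (L : Polynomial ℚ →ₗ[ℚ] ℚ)
    (hL : ∀ k : ℕ, L (fibPoly (2 * k + 1)) = if k = 0 then 1 else 0) :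
    (∀ n k : ℕ, 1 ≤ k → k ≤ n →
      g (2 * n) k = (-1) ^ n * L (Polynomial.X ^ (n + 1 - k) * fibPoly (2 * k - 1))) ∧
    (∀ n k : ℕ, 1 ≤ k → k ≤ n + 1 →
      g (2 * n + 1) k = (-1) ^ n * L (Polynomial.X ^ (n + 1 - k) * fibPoly (2 * k))) := by
  suffices h : ∀ n, (∀ k, 1 ≤ k → k ≤ n → g (2 * n) k = seidelEven L n k) ∧
      (∀ k, 1 ≤ k → k ≤ n + 1 → g (2 * n + 1) k = seidelOdd L n k) from
    ⟨fun n => (h n).1, fun n => (h n).2⟩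
  intro n
  induction n with
  | zero =>
    refine ⟨fun k hk hk0 => by omega, fun k hk hk1 => ?_⟩
    obtain rfl : k = 1 := by omega
    rw [h11, seidelOdd_zero_one hL]
  | succ n ih =>
    have hEven : ∀ k, 1 ≤ k → k ≤ n + 2 → g (2 * (n + 1)) k = seidelEven L (n + 1) k :=
      eq_of_backward_rec (c := g (2 * n + 1)) (N := n + 1)
        (fun k hk hkn => heven (n + 1) (by omega) k hk hkn)
        (fun k hk hkn => by rw [seidelEven_rec L n k hk hkn, ih.2 k hk hkn])
        (by rw [hzero _ _ (Or.inr (by omega)), seidelEven_succ_succ_eq_zero hL])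
    refine ⟨fun k hk hkn => hEven k hk (by omega), fun k hk hkn => ?_⟩
    refine eq_of_forward_rec (c := g (2 * (n + 1))) (N := n + 1)
      (fun k hkn => hodd (n + 1) (by omega) (k + 1) (by omega) (by omega))
      (fun k hkn => by rw [seidelOdd_rec L (n + 1) k hkn, hEven (k + 1) (by omega) (by omega)])
      (by rw [hzero _ _ (Or.inl rfl), seidelOdd_zero]) k hkn

/-- The Seidel triangle for Genocchi numbers is given by
g_(2n,k) = (-1)^n L(s^(n+1-k) F_(2k-1)) for 1 ≤ k ≤ n and
g_(2n+1,k) = (-1)^n L(s^(n+1-k) F_(2k)) for 1 ≤ k ≤ n+1. -/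
theorem stmt10 (g : ℕ → ℕ → ℚ)
    (h11 : g 1 1 = 1) (h21 : g 2 1 = 1)
    (hzero : ∀ i j : ℕ, j = 0 ∨ (i + 1) / 2 < j → g i j = 0)
    (hodd : ∀ i : ℕ, 1 ≤ i → ∀ j : ℕ, 1 ≤ j → j ≤ i + 1 →
      g (2 * i + 1) j = g (2 * i + 1) (j - 1) + g (2 * i) j)
    (heven : ∀ i : ℕ, 1 ≤ i → ∀ j : ℕ, 1 ≤ j → j ≤ i →
      g (2 * i) j = g (2 * i) (j + 1) + g (2 * i - 1) j)
    (L : Polynomial ℚ →ₗ[ℚ] ℚ)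
    (hL : ∀ k : ℕ, L (fibPoly (2 * k + 1)) = if k = 0 then 1 else 0) :
    (∀ n k : ℕ, 1 ≤ k → k ≤ n →
      g (2 * n) k = (-1) ^ n * L (Polynomial.X ^ (n + 1 - k) * fibPoly (2 * k - 1))) ∧
    (∀ n k : ℕ, 1 ≤ k → k ≤ n + 1 →
      g (2 * n + 1) k = (-1) ^ n * L (Polynomial.X ^ (n + 1 - k) * fibPoly (2 * k))) :=
  stmt10_general g h11 hzero hodd heven L hL
end
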